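/- arXiv:2203.07469 — 2 statements merged into one kernel-verified Lean document; each statement's English description precedes it below -/
import Mathlib

section
/- Let ŝ : Δ_n × {1,…,n} → ℝ be a permutation-invariant classical scoring rule and let S[ŝ] be the corresponding spectral score on Dens(n). Then S[ŝ] is truthful if and only if ŝ is proper, and S[ŝ] is strictly truthful if and only if ŝ is strictly proper. -/
open Matrix BigOperators ComplexOrder

noncomputable section

/-- The space of `n × n` complex matrices. -/
abbrev Mat (n : ℕ) := Matrix (Fin n) (Fin n) ℂ

/-- The set of density matrices on ℂⁿ: positive semidefinite with trace 1. -/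
def Dens (n : ℕ) : Set (Mat n) := {ρ | ρ.PosSemidef ∧ ρ.trace = 1}

/-- Real inner product on (Hermitian) matrices: ⟨A,B⟩ = Tr(AB) (real part). -/
def hip {n : ℕ} (A B : Mat n) : ℝ := ((A * B).trace).re

/-- A POVM with finite outcome set `Y`. -/
def IsPOVM {n : ℕ} {Y : Type*} [Fintype Y] (μ : Y → Mat n) : Prop :=
  (∀ y, (μ y).PosSemidef) ∧ ∑ y, μ y = 1

/-- A projection-valued measurement. -/
def IsPVM {n : ℕ} {Y : Type*} [Fintype Y] (μ : Y → Mat n) : Prop :=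
  IsPOVM μ ∧ (∀ y, (μ y).IsHermitian ∧ μ y * μ y = μ y) ∧
    ∀ y y', y ≠ y' → μ y * μ y' = 0

/-- Expected score of a quantum score with report type `R`. -/
def expScoreR {n : ℕ} {R : Type*} {Y : Type*} [Fintype Y]
    (s : R → Y → ℝ) (μ : R → Y → Mat n) (r : R) (ρ : Mat n) : ℝ :=
  ∑ y, hip (μ r y) ρ * s r y

/-- Truthfulness of a quantum score. -/
def Truthful {n : ℕ} {Y : Type*} [Fintype Y]
    (s : Mat n → Y → ℝ) (μ : Mat n → Y → Mat n) : Prop :=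
  ∀ ρ ∈ Dens n, ∀ ρ' ∈ Dens n, expScoreR s μ ρ' ρ ≤ expScoreR s μ ρ ρ

/-- Strict truthfulness of a quantum score. -/
def StrictlyTruthful {n : ℕ} {Y : Type*} [Fintype Y]
    (s : Mat n → Y → ℝ) (μ : Mat n → Y → Mat n) : Prop :=
  Truthful s μ ∧ ∀ ρ ∈ Dens n, ∀ ρ' ∈ Dens n,
    expScoreR s μ ρ' ρ = expScoreR s μ ρ ρ → ρ' = ρ

/-- `d` is a (Hermitian-matrix) subgradient of `F` at `ρ` relative to `Dens n`. -/
def IsQSubgrad {n : ℕ} (F : Mat n → ℝ) (ρ d : Mat n) : Prop :=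
  ∀ τ ∈ Dens n, F ρ + hip d (τ - ρ) ≤ F τ

/-- `d` is a subgradient of `f` at `p` relative to `P ⊆ ℝ^Y`. -/
def IsCSubgrad {Y : Type*} [Fintype Y] (P : Set (Y → ℝ)) (f : (Y → ℝ) → ℝ)
    (p d : Y → ℝ) : Prop :=
  ∀ q ∈ P, f p + ∑ y, d y * (q y - p y) ≤ f q

/-- A POVM is tomographically complete if the real span of its elements is
the set of Hermitian matrices. -/
def TomoComplete {n : ℕ} {Y : Type*} [Fintype Y] (μ : Y → Mat n) : Prop :=
  ∀ X : Mat n, X.IsHermitian ↔ X ∈ Submodule.span ℝ (Set.range μ)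

/-- The eigenvalues of a Hermitian matrix, in non-increasing order
(junk value `0` on non-Hermitian matrices). -/
def eigs {n : ℕ} (ρ : Mat n) : Fin n → ℝ :=
  if h : ρ.IsHermitian then
    fun i => (h.eigenvalues ∘ (Tuple.sort h.eigenvalues)) i.rev
  else 0

/-- The outer product `v v*`. -/
def outer {n : ℕ} (v : Fin n → ℂ) : Mat n := Matrix.vecMulVec v (star v)

/-- A family of orthonormal vectors in ℂⁿ. -/
def ONFam {n k : ℕ} (x : Fin k → Fin n → ℂ) : Prop :=
  ∀ i j, ∑ m, (starRingEnd ℂ) (x i m) * x j m = if i = j then 1 else 0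

/-- `x` is a spectral decomposition of `ρ` (with eigenvalues in non-increasing
order `eigs ρ`). -/
def IsSpecDecomp {n : ℕ} (ρ : Mat n) (x : Fin n → Fin n → ℂ) : Prop :=
  ONFam x ∧ ρ = ∑ y, (eigs ρ y : ℂ) • outer (x y)

/-- Expected classical score `ŝ(q; p)`. -/
def cExp {n : ℕ} (s : (Fin n → ℝ) → Fin n → ℝ) (q p : Fin n → ℝ) : ℝ :=
  ∑ y, p y * s q y

/-- Properness of a classical scoring rule. -/
def Proper {n : ℕ} (s : (Fin n → ℝ) → Fin n → ℝ) : Prop :=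
  ∀ p ∈ stdSimplex ℝ (Fin n), ∀ q ∈ stdSimplex ℝ (Fin n), cExp s q p ≤ cExp s p p

/-- Strict properness of a classical scoring rule. -/
def StrictlyProper {n : ℕ} (s : (Fin n → ℝ) → Fin n → ℝ) : Prop :=
  Proper s ∧ ∀ p ∈ stdSimplex ℝ (Fin n), ∀ q ∈ stdSimplex ℝ (Fin n),
    cExp s q p = cExp s p p → q = p

/-- Permutation invariance of a classical scoring rule: `ŝ(p, y) = ŝ(πp, π y)`
where `(πp)_y = p_{π y}`. -/
def PermInv {n : ℕ} (s : (Fin n → ℝ) → Fin n → ℝ) : Prop :=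
  ∀ (π : Equiv.Perm (Fin n)) (p : Fin n → ℝ) (y : Fin n), s p y = s (p ∘ π) (π y)

/-- Expected spectral score `S[ŝ](ρ'; ρ)` computed using the spectral
decomposition `x` of the report `ρ'`. -/
def specExp {n : ℕ} (s : (Fin n → ℝ) → Fin n → ℝ) (x : Fin n → Fin n → ℂ)
    (ρ' ρ : Mat n) : ℝ :=
  ∑ y, hip (outer (x y)) ρ * s (eigs ρ') y

/-- Truthfulness of the spectral score `S[ŝ]`. -/
def SpecTruthful {n : ℕ} (s : (Fin n → ℝ) → Fin n → ℝ) : Prop :=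
  ∀ ρ ∈ Dens n, ∀ ρ' ∈ Dens n, ∀ x z, IsSpecDecomp ρ' x → IsSpecDecomp ρ z →
    specExp s x ρ' ρ ≤ specExp s z ρ ρ

/-- Strict truthfulness of the spectral score `S[ŝ]`. -/
def SpecStrictlyTruthful {n : ℕ} (s : (Fin n → ℝ) → Fin n → ℝ) : Prop :=
  SpecTruthful s ∧ ∀ ρ ∈ Dens n, ∀ ρ' ∈ Dens n, ∀ x z,
    IsSpecDecomp ρ' x → IsSpecDecomp ρ z →
    specExp s x ρ' ρ = specExp s z ρ ρ → ρ' = ρ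

/-- Elicitability of a property of density matrices by a quantum score. -/
def ElicitableProp {n : ℕ} {R : Type*} (Γ : Mat n → R) : Prop :=
  ∃ (m : ℕ) (s : R → Fin m → ℝ) (μ : R → Fin m → Mat n),
    (∀ r, IsPOVM (μ r)) ∧
    ∀ ρ ∈ Dens n, ∀ r, (∀ r', expScoreR s μ r' ρ ≤ expScoreR s μ r ρ) ↔ r = Γ ρ

/-- Identifiability of an ℝᵏ-valued property of density matrices. -/
def IdentifiableProp {n k : ℕ} (Γ : Mat n → (Fin k → ℝ)) : Prop :=
  ∃ V : (Fin k → ℝ) → Fin k → Mat n,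
    ∀ r ∈ Γ '' (Dens n), (∀ i, (V r i).IsHermitian) ∧
      ∀ ρ ∈ Dens n, (Γ ρ = r ↔ ∀ i, hip (V r i) ρ = 0)

/-- `Γ` is `k`-elicitable. -/
def KElicitable {n : ℕ} {R : Type*} (k : ℕ) (Γ : Mat n → R) : Prop :=
  ∃ (Γh : Mat n → (Fin k → ℝ)) (ψ : (Fin k → ℝ) → R),
    ElicitableProp Γh ∧ IdentifiableProp Γh ∧ ∀ ρ ∈ Dens n, Γ ρ = ψ (Γh ρ)

end

/-!
Let `ρ = ∑ λ_k z_k z_k*` be the truth and `x` an eigenbasis of the report `ρ'`. The outcome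
distribution of measuring `ρ` in the basis `x` is `D λ(ρ)`, where `D_{yk} = |⟨x_y, z_k⟩|²` is doubly
stochastic, so the expected spectral score is the classical score of the forecast `λ(ρ')` against
`D λ(ρ)`. By Birkhoff's theorem `D λ(ρ)` is a mixture of permutations of `λ(ρ)`; by permutation
invariance each component compares a permuted forecast against `λ(ρ)` itself, so properness bounds
the score by `ŝ(λ(ρ); λ(ρ))`, the truthful spectral score. Under strict properness equality forces
`λ(ρ') = λ(ρ)` and `⟨x_y, ρ x_y⟩ = λ_y`, and comparing Frobenius norms then gives `ρ = ρ'`.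
Conversely, reports and truths that are diagonal in the standard basis turn the spectral score into
the classical one.
-/

open Finset

section Classical

variable {n : ℕ} {s : (Fin n → ℝ) → Fin n → ℝ}

/-- `PermInv` pairs the right action `p ↦ p ∘ π` on forecasts with the left action `y ↦ π y` on
outcomes; since `π⁻¹` is conjugate to `π`, it still yields the natural relabelling invariance. -/
theorem PermInv.apply_comp (hs : PermInv s) (π : Equiv.Perm (Fin n)) (p : Fin n → ℝ)
    (y : Fin n) : s (p ∘ π) y = s p (π y) := by
  obtain ⟨c, hc⟩ := isConj_iff.1
    (Equiv.Perm.isConj_iff_cycleType_eq.2 (Equiv.Perm.cycleType_inv π).symm)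
  have hcπ : ∀ i, c (π (c.symm i)) = π.symm i := fun i => by
    simpa [Equiv.Perm.mul_apply] using congr($hc i)
  have hp : ((p ∘ π) ∘ c) ∘ (π * c⁻¹) = p := by
    funext i
    simp [hcπ]
  rw [hs c, hs (π * c⁻¹), hp]
  simp [Equiv.Perm.mul_apply]

theorem cExp_comp_perm (hs : PermInv s) (π : Equiv.Perm (Fin n)) (q p : Fin n → ℝ) :
    cExp s (q ∘ π) (p ∘ π) = cExp s q p := by
  simp only [cExp, Function.comp_apply, hs.apply_comp]
  exact Equiv.sum_comp π fun y => p y * s q y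

theorem comp_equiv_mem_stdSimplex {𝕜 ι : Type*} [Semiring 𝕜] [PartialOrder 𝕜] [Fintype ι]
    {p : ι → 𝕜} (hp : p ∈ stdSimplex 𝕜 ι) (e : ι ≃ ι) : p ∘ e ∈ stdSimplex 𝕜 ι :=
  ⟨fun i => hp.1 (e i), (Equiv.sum_comp e p).trans hp.2⟩

theorem exists_mulVec_eq_sum_perm {R ι : Type*} [Field R] [LinearOrder R] [IsStrictOrderedRing R]
    [Fintype ι] [DecidableEq ι] {D : Matrix ι ι R} (hD : D ∈ doublyStochastic R ι) (v : ι → R) :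
    ∃ c : Equiv.Perm ι → R, (∀ σ, 0 ≤ c σ) ∧ ∑ σ, c σ = 1 ∧
      D *ᵥ v = ∑ σ, c σ • (v ∘ σ) := by
  obtain ⟨c, hc0, hc1, hD⟩ := exists_eq_sum_perm_of_mem_doublyStochastic hD
  refine ⟨c, hc0, hc1, ?_⟩
  simp [← hD, Matrix.sum_mulVec, Matrix.smul_mulVec, Matrix.permMatrix_mulVec]

theorem cExp_sum_smul_comp_perm (hs : PermInv s) (c : Equiv.Perm (Fin n) → ℝ)
    (q L : Fin n → ℝ) :
    cExp s q (∑ σ, c σ • (L ∘ σ)) = ∑ σ, c σ * cExp s (q ∘ σ.symm) L := by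
  have hlin : ∀ p, cExp s q p = p ⬝ᵥ s q := fun _ => rfl
  simp only [hlin, sum_dotProduct, smul_dotProduct, smul_eq_mul]
  refine sum_congr rfl fun σ _ => ?_
  rw [← hlin, ← cExp_comp_perm hs σ (q ∘ σ.symm) L]
  simp [Function.comp_def]

theorem Proper.cExp_mulVec_le (hs : PermInv s) (hP : Proper s) {L q : Fin n → ℝ}
    (hL : L ∈ stdSimplex ℝ (Fin n)) (hq : q ∈ stdSimplex ℝ (Fin n))
    {D : Matrix (Fin n) (Fin n) ℝ} (hD : D ∈ doublyStochastic ℝ (Fin n)) :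
    cExp s q (D *ᵥ L) ≤ cExp s L L := by
  obtain ⟨c, hc0, hc1, hDL⟩ := exists_mulVec_eq_sum_perm hD L
  calc cExp s q (D *ᵥ L) = ∑ σ, c σ * cExp s (q ∘ σ.symm) L := by
        rw [hDL, cExp_sum_smul_comp_perm hs]
    _ ≤ ∑ σ, c σ * cExp s L L :=
        sum_le_sum fun σ _ => mul_le_mul_of_nonneg_left
          (hP L hL _ (comp_equiv_mem_stdSimplex hq _)) (hc0 σ)
    _ = cExp s L L := by rw [← sum_mul, hc1, one_mul]

theorem StrictlyProper.mulVec_eq_of_cExp_mulVec_eq (hs : PermInv s) (hP : StrictlyProper s)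
    {L q : Fin n → ℝ} (hL : L ∈ stdSimplex ℝ (Fin n)) (hq : q ∈ stdSimplex ℝ (Fin n))
    {D : Matrix (Fin n) (Fin n) ℝ} (hD : D ∈ doublyStochastic ℝ (Fin n))
    (heq : cExp s q (D *ᵥ L) = cExp s L L) :
    D *ᵥ L = q ∧ ∃ σ : Equiv.Perm (Fin n), q ∘ σ = L := by
  obtain ⟨c, hc0, hc1, hDL⟩ := exists_mulVec_eq_sum_perm hD L
  have hle : ∀ σ, c σ * cExp s (q ∘ σ.symm) L ≤ c σ * cExp s L L := fun σ =>
    mul_le_mul_of_nonneg_left (hP.1 L hL _ (comp_equiv_mem_stdSimplex hq _)) (hc0 σ)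
  have hsum : ∑ σ, c σ * cExp s (q ∘ σ.symm) L = ∑ σ, c σ * cExp s L L := by
    rw [← cExp_sum_smul_comp_perm hs, ← hDL, heq, ← sum_mul, hc1, one_mul]
  have hsupp : ∀ σ, c σ ≠ 0 → q ∘ σ.symm = L := fun σ hσ =>
    hP.2 L hL _ (comp_equiv_mem_stdSimplex hq _)
      (mul_left_cancel₀ hσ ((sum_eq_sum_iff_of_le fun σ _ => hle σ).1 hsum σ (mem_univ σ)))
  obtain ⟨σ, -, hσ⟩ := exists_ne_zero_of_sum_ne_zero (hc1.trans_ne one_ne_zero)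
  refine ⟨?_, σ.symm, hsupp σ hσ⟩
  calc D *ᵥ L = ∑ σ, c σ • q := by
        rw [hDL]
        refine sum_congr rfl fun τ _ => ?_
        rcases eq_or_ne (c τ) 0 with h | h
        · simp [h]
        · rw [← hsupp τ h]
          simp [Function.comp_def]
    _ = q := by rw [← sum_smul, hc1, one_smul]

end Classical

section Sorting

variable {n : ℕ}

def sortDesc {α : Type*} [LinearOrder α] (f : Fin n → α) : Equiv.Perm (Fin n) :=
  Fin.revPerm.trans (Tuple.sort f)

theorem antitone_comp_sortDesc {α : Type*} [LinearOrder α] (f : Fin n → α) :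
    Antitone (f ∘ sortDesc f) :=
  fun _ _ hij => Tuple.monotone_sort f (Fin.rev_le_rev.2 hij)

theorem eq_of_antitone_of_map_univ_eq {α : Type*} [LinearOrder α] {f g : Fin n → α}
    (hf : Antitone f) (hg : Antitone g) (h : univ.val.map f = univ.val.map g) : f = g := by
  rw [Fin.univ_val_map, Fin.univ_val_map, Multiset.coe_eq_coe] at h
  exact List.ofFn_injective (h.eq_of_sortedGE hf.sortedGE_ofFn hg.sortedGE_ofFn)

theorem eigs_of_isHermitian {ρ : Mat n} (hρ : ρ.IsHermitian) :
    eigs ρ = hρ.eigenvalues ∘ sortDesc hρ.eigenvalues := by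
  rw [eigs, dif_pos hρ]
  rfl

theorem eigs_antitone {ρ : Mat n} (hρ : ρ.IsHermitian) : Antitone (eigs ρ) := by
  rw [eigs_of_isHermitian hρ]
  exact antitone_comp_sortDesc _

theorem eigs_diagonal (p : Fin n → ℝ) :
    eigs (diagonal fun i => (p i : ℂ)) = p ∘ sortDesc p := by
  have hH : (diagonal fun i => (p i : ℂ)).IsHermitian :=
    isHermitian_diagonal_of_self_adjoint _ (by ext; simp)
  refine eq_of_antitone_of_map_univ_eq (eigs_antitone hH) (antitone_comp_sortDesc p) ?_
  have hroots := hH.roots_charpoly_eq_eigenvalues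
  rw [charpoly_diagonal, Polynomial.roots_prod _ _ (by simp [prod_ne_zero_iff,
    Polynomial.X_sub_C_ne_zero])] at hroots
  rw [eigs_of_isHermitian hH, ← Multiset.map_map, Multiset.map_univ_val_equiv,
    ← Multiset.map_map, Multiset.map_univ_val_equiv]
  refine Multiset.map_injective Complex.ofReal_injective ?_
  simpa [Multiset.map_map, Function.comp_def] using hroots.symm

end Sorting

section Outer

variable {n : ℕ}

theorem hip_comm (A B : Mat n) : hip A B = hip B A := by
  rw [hip, hip, trace_mul_comm]

theorem hip_sum_right {ι : Type*} (A : Mat n) (t : Finset ι) (f : ι → Mat n) :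
    hip A (∑ k ∈ t, f k) = ∑ k ∈ t, hip A (f k) := by
  simp [hip, Matrix.mul_sum, trace_sum]

theorem hip_ofReal_smul_right (A B : Mat n) (t : ℝ) : hip A ((t : ℂ) • B) = t * hip A B := by
  simp [hip]

theorem hip_sub_right (A B C : Mat n) : hip A (B - C) = hip A B - hip A C := by
  simp [hip, Matrix.mul_sub]

theorem hip_sub_left (A B C : Mat n) : hip (A - B) C = hip A C - hip B C := by
  simp [hip, Matrix.sub_mul]

theorem Matrix.IsHermitian.eq_zero_of_hip_self {A : Mat n} (hA : A.IsHermitian)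
    (h : hip A A = 0) : A = 0 := by
  have hnn : 0 ≤ (Aᴴ * A).trace := (posSemidef_conjTranspose_mul_self A).trace_nonneg
  rw [← trace_conjTranspose_mul_self_eq_zero_iff]
  have hre : (Aᴴ * A).trace.re = 0 := by rwa [hA.eq]
  exact Complex.ext hre (Complex.le_def.1 hnn).2.symm

theorem hip_outer (v : Fin n → ℂ) (A : Mat n) : hip (outer v) A = (star v ⬝ᵥ (A *ᵥ v)).re := by
  rw [hip, outer, vecMulVec_mul, dotProduct_mulVec, dotProduct_comm]
  rfl

theorem hip_outer_nonneg {A : Mat n} (hA : A.PosSemidef) (v : Fin n → ℂ) :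
    0 ≤ hip (outer v) A := by
  rw [hip_outer]
  exact (Complex.le_def.1 (hA.dotProduct_mulVec_nonneg v)).1

theorem hip_outer_outer (v w : Fin n → ℂ) :
    hip (outer v) (outer w) = Complex.normSq (star v ⬝ᵥ w) := by
  rw [hip_outer, outer, vecMulVec_mulVec, dotProduct_smul, op_smul_eq_mul, star_dotProduct w v,
    Complex.star_def, Complex.mul_conj, Complex.ofReal_re]

end Outer

section Orthonormal

variable {n : ℕ} {x : Fin n → Fin n → ℂ}

theorem ONFam.star_dotProduct (hx : ONFam x) (i j : Fin n) :
    star (x i) ⬝ᵥ x j = if i = j then 1 else 0 :=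
  hx i j

theorem ONFam.hip_outer_outer (hx : ONFam x) (i j : Fin n) :
    hip (outer (x i)) (outer (x j)) = if i = j then 1 else 0 := by
  rw [_root_.hip_outer_outer, hx.star_dotProduct]
  split_ifs <;> simp

theorem ONFam.sum_outer (hx : ONFam x) : ∑ y, outer (x y) = 1 := by
  set V : Mat n := (Matrix.of x)ᵀ
  have hV : Vᴴ * V = 1 := by
    ext i j
    simpa [V, Matrix.mul_apply, one_apply] using hx i j
  calc ∑ y, outer (x y) = V * Vᴴ := by
        ext i j
        simp [V, outer, Matrix.mul_apply, Matrix.sum_apply, vecMulVec_apply]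
    _ = 1 := mul_eq_one_comm.1 hV

theorem ONFam.hip_outer_one (hx : ONFam x) (y : Fin n) : hip (outer (x y)) 1 = 1 := by
  simp [hip_outer, hx.star_dotProduct]

theorem hip_sum_smul_outer_left (d : Fin n → ℝ) (x : Fin n → Fin n → ℂ) (B : Mat n) :
    hip (∑ k, (d k : ℂ) • outer (x k)) B = ∑ k, d k * hip (outer (x k)) B := by
  rw [hip_comm, hip_sum_right]
  refine Finset.sum_congr rfl fun k _ => ?_
  rw [hip_ofReal_smul_right, hip_comm]

theorem ONFam.hip_outer_sum_smul_outer (hx : ONFam x) (d : Fin n → ℝ) (y : Fin n) :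
    hip (outer (x y)) (∑ k, (d k : ℂ) • outer (x k)) = d y := by
  simp only [hip_sum_right, hip_ofReal_smul_right, hx.hip_outer_outer]
  simp

theorem isHermitian_sum_smul_outer (d : Fin n → ℝ) (x : Fin n → Fin n → ℂ) :
    (∑ k, (d k : ℂ) • outer (x k)).IsHermitian := by
  refine isSelfAdjoint_sum _ fun k _ => IsHermitian.smul ?_ (Complex.conj_ofReal (d k))
  rw [IsHermitian, outer, conjTranspose_vecMulVec, star_star]

end Orthonormal

section SpectralScore

variable {n : ℕ} {s : (Fin n → ℝ) → Fin n → ℝ} {ρ ρ' : Mat n} {x z : Fin n → Fin n → ℂ}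

theorem IsSpecDecomp.hip_outer_self (hz : IsSpecDecomp ρ z) (y : Fin n) :
    hip (outer (z y)) ρ = eigs ρ y := by
  conv_lhs => rw [hz.2]
  exact hz.1.hip_outer_sum_smul_outer _ y

theorem IsSpecDecomp.eigs_mem_stdSimplex (hz : IsSpecDecomp ρ z) (hρ : ρ ∈ Dens n) :
    eigs ρ ∈ stdSimplex ℝ (Fin n) := by
  refine ⟨fun y => hz.hip_outer_self y ▸ hip_outer_nonneg hρ.1 _, ?_⟩
  calc ∑ y, eigs ρ y = ∑ y, hip ρ (outer (z y)) := by
        simp only [hip_comm ρ, hz.hip_outer_self]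
    _ = 1 := by rw [← hip_sum_right, hz.1.sum_outer, hip, mul_one, hρ.2, Complex.one_re]

theorem specExp_self (hz : IsSpecDecomp ρ z) : specExp s z ρ ρ = cExp s (eigs ρ) (eigs ρ) := by
  simp only [specExp, cExp, hz.hip_outer_self]

/-- The overlap matrix `|⟨x_y, z_k⟩|²` of two orthonormal bases. -/
def overlap (x z : Fin n → Fin n → ℂ) : Matrix (Fin n) (Fin n) ℝ :=
  Matrix.of fun y k => hip (outer (x y)) (outer (z k))

theorem overlap_mem_doublyStochastic (hx : ONFam x) (hz : ONFam z) :
    overlap x z ∈ doublyStochastic ℝ (Fin n) := by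
  refine mem_doublyStochastic_iff_sum.2 ⟨fun y k => ?_, fun y => ?_, fun k => ?_⟩
  · rw [overlap, of_apply, hip_outer_outer]
    exact Complex.normSq_nonneg _
  · simp only [overlap, of_apply, ← hip_sum_right, hz.sum_outer, hx.hip_outer_one]
  · simp only [overlap, of_apply, hip_comm (outer (x _)), ← hip_sum_right, hx.sum_outer,
      hz.hip_outer_one]

theorem IsSpecDecomp.hip_outer_eq_overlap_mulVec (hz : IsSpecDecomp ρ z) (x : Fin n → Fin n → ℂ) :
    (fun y => hip (outer (x y)) ρ) = overlap x z *ᵥ eigs ρ := by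
  funext y
  conv_lhs => rw [hz.2]
  simp only [hip_sum_right, hip_ofReal_smul_right, mulVec, dotProduct, overlap, of_apply, mul_comm]

theorem specExp_eq_cExp_overlap_mulVec (hz : IsSpecDecomp ρ z) :
    specExp s x ρ' ρ = cExp s (eigs ρ') (overlap x z *ᵥ eigs ρ) := by
  rw [← hz.hip_outer_eq_overlap_mulVec]
  rfl

theorem IsSpecDecomp.eq_sum_smul_outer (hz : IsSpecDecomp ρ z) (hx : ONFam x)
    (h : ∀ y, hip (outer (x y)) ρ = eigs ρ y) : ρ = ∑ y, (eigs ρ y : ℂ) • outer (x y) := by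
  set A := ∑ y, (eigs ρ y : ℂ) • outer (x y)
  have hAA : hip A A = ∑ y, eigs ρ y * eigs ρ y := by
    simp only [A, hip_sum_smul_outer_left, hx.hip_outer_sum_smul_outer]
  have hAρ : hip A ρ = ∑ y, eigs ρ y * eigs ρ y := by
    simp only [A, hip_sum_smul_outer_left, h]
  have hρρ : hip ρ ρ = ∑ y, eigs ρ y * eigs ρ y := by
    conv_lhs => enter [1]; rw [hz.2]
    simp only [hip_sum_smul_outer_left, hz.hip_outer_self]
  have hH : (A - ρ).IsHermitian := by
    refine (isHermitian_sum_smul_outer _ _).sub ?_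
    rw [hz.2]
    exact isHermitian_sum_smul_outer _ _
  have hzero : hip (A - ρ) (A - ρ) = 0 := by
    rw [hip_sub_left, hip_sub_right, hip_sub_right, hip_comm ρ A, hAA, hAρ, hρρ]
    ring
  exact (sub_eq_zero.1 (hH.eq_zero_of_hip_self hzero)).symm

theorem Proper.specTruthful (hs : PermInv s) (hP : Proper s) : SpecTruthful s := by
  intro ρ hρ ρ' hρ' x z hx hz
  rw [specExp_eq_cExp_overlap_mulVec hz, specExp_self hz]
  exact hP.cExp_mulVec_le hs (hz.eigs_mem_stdSimplex hρ) (hx.eigs_mem_stdSimplex hρ')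
    (overlap_mem_doublyStochastic hx.1 hz.1)

theorem StrictlyProper.specStrictlyTruthful (hs : PermInv s) (hP : StrictlyProper s) :
    SpecStrictlyTruthful s := by
  refine ⟨hP.1.specTruthful hs, fun ρ hρ ρ' hρ' x z hx hz heq => ?_⟩
  rw [specExp_eq_cExp_overlap_mulVec hz, specExp_self hz] at heq
  obtain ⟨hmul, σ, hσ⟩ := hP.mulVec_eq_of_cExp_mulVec_eq hs (hz.eigs_mem_stdSimplex hρ)
    (hx.eigs_mem_stdSimplex hρ') (overlap_mem_doublyStochastic hx.1 hz.1) heq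
  have heigs : eigs ρ' = eigs ρ := by
    have h := Tuple.unique_antitone (f := eigs ρ') (σ := σ) (τ := 1) (hσ ▸ eigs_antitone hρ.1.1)
      (eigs_antitone hρ'.1.1)
    rwa [hσ, Equiv.Perm.coe_one, Function.comp_id, eq_comm] at h
  have hdiag : ∀ y, hip (outer (x y)) ρ = eigs ρ y := fun y => by
    rw [congrFun (hz.hip_outer_eq_overlap_mulVec x) y, hmul, heigs]
  rw [hz.eq_sum_smul_outer hx.1 hdiag, hx.2, heigs]

end SpectralScore

section Diagonal

variable {n : ℕ}

theorem ONFam.single_comp (σ : Equiv.Perm (Fin n)) :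
    ONFam fun y => (Pi.single (σ y) 1 : Fin n → ℂ) := by
  intro i j
  simp [Pi.single_apply, σ.injective.eq_iff, eq_comm]

theorem hip_outer_single (m : Fin n) (A : Mat n) :
    hip (outer (Pi.single m 1)) A = (A m m).re := by
  simp [hip_outer]

theorem isSpecDecomp_diagonal (p : Fin n → ℝ) :
    IsSpecDecomp (diagonal fun i => (p i : ℂ)) fun y => Pi.single (sortDesc p y) 1 := by
  refine ⟨ONFam.single_comp _, ?_⟩
  rw [eigs_diagonal]
  simp only [Function.comp_apply]
  rw [Equiv.sum_comp (sortDesc p) fun m => (p m : ℂ) • outer (Pi.single m 1)]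
  ext i j
  by_cases hij : i = j <;> simp [hij, Matrix.sum_apply, outer, vecMulVec_apply, Pi.single_apply]

theorem diagonal_mem_Dens {p : Fin n → ℝ} (hp : p ∈ stdSimplex ℝ (Fin n)) :
    (diagonal fun i => (p i : ℂ)) ∈ Dens n := by
  refine ⟨posSemidef_diagonal_iff.2 fun i => ?_, ?_⟩
  · exact_mod_cast hp.1 i
  · rw [trace_diagonal, ← Complex.ofReal_sum, hp.2, Complex.ofReal_one]

theorem specExp_diagonal {s : (Fin n → ℝ) → Fin n → ℝ} (hs : PermInv s) (p q : Fin n → ℝ) :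
    specExp s (fun y => Pi.single (sortDesc q y) 1) (diagonal fun i => (q i : ℂ))
      (diagonal fun i => (p i : ℂ)) = cExp s q p := by
  rw [← cExp_comp_perm hs (sortDesc q), ← eigs_diagonal]
  simp [specExp, cExp, hip_outer_single]

end Diagonal

section Converse

variable {n : ℕ} {s : (Fin n → ℝ) → Fin n → ℝ}

theorem SpecTruthful.proper (hs : PermInv s) (hT : SpecTruthful s) : Proper s := by
  intro p hp q hq
  have h := hT _ (diagonal_mem_Dens hp) _ (diagonal_mem_Dens hq) _ _
    (isSpecDecomp_diagonal q) (isSpecDecomp_diagonal p)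
  rwa [specExp_diagonal hs, specExp_diagonal hs] at h

theorem SpecStrictlyTruthful.strictlyProper (hs : PermInv s) (hT : SpecStrictlyTruthful s) :
    StrictlyProper s := by
  refine ⟨hT.1.proper hs, fun p hp q hq heq => ?_⟩
  have h := hT.2 _ (diagonal_mem_Dens hp) _ (diagonal_mem_Dens hq) _ _
    (isSpecDecomp_diagonal q) (isSpecDecomp_diagonal p)
    (by rw [specExp_diagonal hs, specExp_diagonal hs, heq])
  funext i
  simpa using congrFun (diagonal_injective h) i

end Converse

/-- a spectral score is (strictly) truthful iff the underlying
classical scoring rule is (strictly) proper. -/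
theorem spectral_truthful_iff_proper {n : ℕ}
    (sh : (Fin n → ℝ) → Fin n → ℝ) (hperm : PermInv sh) :
    (SpecTruthful sh ↔ Proper sh) ∧
    (SpecStrictlyTruthful sh ↔ StrictlyProper sh) :=
  ⟨⟨(·.proper hperm), (·.specTruthful hperm)⟩,
    ⟨(·.strictlyProper hperm), (·.specStrictlyTruthful hperm)⟩⟩
end

section
/- For n ≥ 2, the eigenvalue property λ : Dens(n) → ℝⁿ (assigning to each density matrix its vector of eigenvalues in non-increasing order) is not elicitable: there is no quantum score with report set ℝⁿ such that for every ρ ∈ Dens(n), {λ(ρ)} = argmax_{r∈ℝⁿ} S(r; ρ). -/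
open Matrix BigOperators ComplexOrder

/-!
The expected score is affine in the state, so a report that is optimal for two states is optimal
for every mixture of them: the level sets of an elicitable property are convex. The basis states
`|0⟩⟨0|` and `|1⟩⟨1|` have the same spectrum `(1, 0, …, 0)`, but their even mixture has spectrum
`(1/2, 1/2, 0, …, 0)`; spectra are compared through characteristic polynomials.
-/

open Polynomial

section Affine

variable {n : ℕ}

lemma hip_convexComb_right (A X Y : Mat n) (a b : ℝ) :
    hip A (a • X + b • Y) = a * hip A X + b * hip A Y := by
  simp only [hip, mul_add, mul_smul_comm, trace_add, trace_smul, Complex.add_re,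
    Complex.real_smul, Complex.re_ofReal_mul]

lemma expScoreR_convexComb {R Y : Type*} [Fintype Y] (s : R → Y → ℝ) (μ : R → Y → Mat n)
    (r : R) (X X' : Mat n) (a b : ℝ) :
    expScoreR s μ r (a • X + b • X') = a * expScoreR s μ r X + b * expScoreR s μ r X' := by
  simp only [expScoreR, hip_convexComb_right, Finset.mul_sum, ← Finset.sum_add_distrib]
  exact Finset.sum_congr rfl fun _ _ => by ring

lemma convex_dens : Convex ℝ (Dens n) := by
  rintro X ⟨hX, hXtr⟩ Y ⟨hY, hYtr⟩ a b ha hb hab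
  refine ⟨(hX.smul ha).add (hY.smul hb), ?_⟩
  rw [trace_add, trace_smul, trace_smul, hXtr, hYtr, ← add_smul, hab, one_smul]

end Affine

def Elicits {n : ℕ} {R Y : Type*} [Fintype Y] (s : R → Y → ℝ) (μ : R → Y → Mat n)
    (Γ : Mat n → R) : Prop :=
  ∀ ρ ∈ Dens n, ∀ r, (∀ r', expScoreR s μ r' ρ ≤ expScoreR s μ r ρ) ↔ r = Γ ρ

theorem Elicits.convex_levelSet {n : ℕ} {R Y : Type*} [Fintype Y] {s : R → Y → ℝ}
    {μ : R → Y → Mat n} {Γ : Mat n → R} (hΓ : Elicits s μ Γ) (r : R) :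
    Convex ℝ {ρ ∈ Dens n | Γ ρ = r} := by
  rintro X ⟨hX, rfl⟩ Y ⟨hY, hXY⟩ a b ha hb hab
  have hmix := convex_dens hX hY ha hb hab
  refine ⟨hmix, ((hΓ _ hmix _).mp fun r' => ?_).symm⟩
  have hXopt := (hΓ X hX (Γ X)).mpr rfl r'
  have hYopt := (hΓ Y hY (Γ X)).mpr hXY.symm r'
  rw [expScoreR_convexComb, expScoreR_convexComb]
  gcongr

section Eigs

variable {n : ℕ} {A B : Mat n}

lemma charpoly_eq_prod_eigs (hA : A.IsHermitian) :
    A.charpoly = ∏ i, (X - C ((eigs A i : ℝ) : ℂ)) := by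
  rw [hA.charpoly_eq, ← Equiv.prod_comp (Fin.revPerm.trans (Tuple.sort hA.eigenvalues))]
  simp only [eigs, dif_pos hA]
  rfl

lemma eigs_eq_eigs_iff (hA : A.IsHermitian) (hB : B.IsHermitian) :
    eigs A = eigs B ↔ A.charpoly = B.charpoly := by
  refine ⟨fun h => by rw [charpoly_eq_prod_eigs hA, charpoly_eq_prod_eigs hB, h], fun h => ?_⟩
  have := (hA.eigenvalues_eq_eigenvalues_iff hB).mpr h
  simp only [eigs, dif_pos hA, dif_pos hB, this]

end Eigs

lemma charpoly_diagonal_comp_equiv {ι R : Type*} [Fintype ι] [DecidableEq ι] [CommRing R]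
    (d : ι → R) (σ : Equiv.Perm ι) : (diagonal (d ∘ σ)).charpoly = (diagonal d).charpoly := by
  simp only [charpoly_diagonal, Function.comp_apply, Equiv.prod_comp σ (fun i => X - C (d i))]

lemma isRoot_charpoly_diagonal_iff {ι R : Type*} [Fintype ι] [DecidableEq ι] [CommRing R]
    [IsDomain R] (d : ι → R) (a : R) : (diagonal d).charpoly.IsRoot a ↔ ∃ i, d i = a := by
  simp only [IsRoot.def, charpoly_diagonal, eval_prod, eval_sub, eval_X, eval_C,
    Finset.prod_eq_zero_iff, Finset.mem_univ, true_and, sub_eq_zero, eq_comm (a := a)]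

section BasisStates

variable {n : ℕ}

lemma diagonal_single_mem_dens (i : Fin n) : diagonal (Pi.single i 1) ∈ Dens n :=
  ⟨posSemidef_diagonal_iff.mpr fun k => by by_cases h : k = i <;> simp [h],
    by rw [trace_diagonal, Finset.sum_pi_single']; simp⟩

lemma eigs_diagonal_single (i j : Fin n) :
    eigs (diagonal (Pi.single i 1)) = eigs (diagonal (Pi.single j 1) : Mat n) := by
  have hswap : (Pi.single j 1 : Fin n → ℂ) ∘ Equiv.swap i j = Pi.single i 1 := by
    funext k
    by_cases hki : k = i
    · simp [hki]
    · by_cases hkj : k = j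
      · by_cases hij : i = j <;> simp_all
      · simp [Equiv.swap_apply_of_ne_of_ne hki hkj, hki, hkj]
  rw [eigs_eq_eigs_iff (diagonal_single_mem_dens i).1.isHermitian
    (diagonal_single_mem_dens j).1.isHermitian, ← hswap, charpoly_diagonal_comp_equiv]

lemma eigs_midpoint_diagonal_single_ne {i j : Fin n} (hij : i ≠ j) :
    eigs ((2⁻¹ : ℝ) • diagonal (Pi.single i 1) + (2⁻¹ : ℝ) • diagonal (Pi.single j 1))
      ≠ eigs (diagonal (Pi.single i 1) : Mat n) := by
  have hmix := convex_dens (diagonal_single_mem_dens i) (diagonal_single_mem_dens j)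
    (by norm_num : (0 : ℝ) ≤ 2⁻¹) (by norm_num : (0 : ℝ) ≤ 2⁻¹) (by norm_num)
  rw [Ne, eigs_eq_eigs_iff hmix.1.isHermitian (diagonal_single_mem_dens i).1.isHermitian,
    ← diagonal_smul, ← diagonal_smul, diagonal_add]
  intro h
  have hroot : (diagonal (Pi.single i (1 : ℂ))).charpoly.IsRoot 1 :=
    (isRoot_charpoly_diagonal_iff _ _).mpr ⟨i, by simp⟩
  rw [← h, isRoot_charpoly_diagonal_iff] at hroot
  obtain ⟨k, hk⟩ := hroot
  by_cases hki : k = i <;> by_cases hkj : k = j <;> simp_all [Pi.single_apply]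

end BasisStates

/-- for n ≥ 2, the sorted eigenvalue vector of a density matrix
is not elicitable. -/
theorem eigenvalues_not_elicitable {n : ℕ} (hn : 2 ≤ n) :
    ¬ ∃ (m : ℕ) (s : (Fin n → ℝ) → Fin m → ℝ)
        (μ : (Fin n → ℝ) → Fin m → Mat n),
      (∀ r, IsPOVM (μ r)) ∧
      ∀ ρ ∈ Dens n, ∀ r : Fin n → ℝ,
        (∀ r', expScoreR s μ r' ρ ≤ expScoreR s μ r ρ) ↔ r = eigs ρ := by
  rintro ⟨m, s, μ, -, helicits⟩
  let i : Fin n := ⟨0, by omega⟩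
  let j : Fin n := ⟨1, by omega⟩
  have hij : i ≠ j := by simp [i, j, Fin.ext_iff]
  have hlevel : Elicits s μ eigs := helicits
  have hmix := hlevel.convex_levelSet (eigs (diagonal (Pi.single i 1)))
    ⟨diagonal_single_mem_dens i, rfl⟩ ⟨diagonal_single_mem_dens j, eigs_diagonal_single j i⟩
    (by norm_num : (0 : ℝ) ≤ 2⁻¹) (by norm_num : (0 : ℝ) ≤ 2⁻¹) (by norm_num)
  exact eigs_midpoint_diagonal_single_ne hij hmix.2
end
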